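/- Let M = (G, π) be an ACGS, s a state of M, σ ∈ {IR, Ir, iR, ir}, and φ an ATL* formula such that: (1) π(i) = σ for every i ∈ Ag_φ; (2) π(i) = IR for every i ∈ Ag \ Ag_φ; and (3) for every occurrence of a coalition modality ⟨⟨A'⟩⟩ψ in φ, A' = Ag_φ. Then G, s ⊨_σ φ if and only if M, s ⊨ φ. -/
import Mathlib


namespace ACGS

/-- Strategy types: perfect/imperfect information (`I`/`i`) and
perfect/imperfect recall (`R`/`r`). -/
inductive SType where
  | IR | Ir | iR | ir
deriving DecidableEq

/-- A concurrent game structure. -/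
structure CGS (S Agt AP : Type) (Ac : Agt → Type) where
  init : Set S
  sim : Agt → S → S → Prop
  sim_equiv : ∀ i, Equivalence (sim i)
  prot : (i : Agt) → S → Set (Ac i)
  prot_nonempty : ∀ i s, (prot i s).Nonempty
  prot_sim : ∀ i s s', sim i s s' → prot i s = prot i s'
  trans : S → ((i : Agt) → Ac i) → S
  label : S → Set AP

variable {S Agt AP : Type} {Ac : Agt → Type}

/-- A history: a nonempty list of states, most recent state first. -/
abbrev Hist (S : Type) : Type := { l : List S // l ≠ [] }

/-- The current (last) state of a history. -/
def Hist.cur (h : Hist S) : S := h.1.head h.2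

def Hist.one (s : S) : Hist S := ⟨[s], by simp⟩

def Hist.cons (s : S) (h : Hist S) : Hist S := ⟨s :: h.1, by simp⟩

/-- Indistinguishability of (equal-length) histories for agent `i`:
componentwise epistemic accessibility. -/
def Hist.sim (G : CGS S Agt AP Ac) (i : Agt) (h h' : Hist S) : Prop :=
  List.Forall₂ (G.sim i) h.1 h'.1

/-- A strategy of agent `i` (a priori with perfect information and perfect recall):
a protocol-respecting function from histories to local actions. -/
structure Strat (G : CGS S Agt AP Ac) (i : Agt) where
  act : Hist S → Ac i
  legal : ∀ h, act h ∈ G.prot i h.cur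

/-- `θ` is a `σ`-strategy of agent `i`.  `Ir`- and `ir`-strategies are (extensions
to histories of) functions of the last state, `iR`-strategies respect history
indistinguishability, `ir`-strategies moreover respect state indistinguishability. -/
def StratOfType (G : CGS S Agt AP Ac) (i : Agt) : SType → Strat G i → Prop
  | .IR, _ => True
  | .Ir, θ => ∀ h h', h.cur = h'.cur → θ.act h = θ.act h'
  | .iR, θ => ∀ h h', Hist.sim G i h h' → θ.act h = θ.act h'
  | .ir, θ => ∀ h h', G.sim i h.cur h'.cur → θ.act h = θ.act h'

/-- A full strategy profile. -/
def Profile (G : CGS S Agt AP Ac) := ∀ i, Strat G i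

/-- The history of the unique play from `s` where all agents follow `η`. -/
def playHist (G : CGS S Agt AP Ac) (η : Profile G) (s : S) : ℕ → Hist S
  | 0 => Hist.one s
  | n+1 =>
    let h := playHist G η s n
    Hist.cons (G.trans h.cur fun i => (η i).act h) h

/-- The unique play from `s` where every agent follows the profile `η`. -/
def play (G : CGS S Agt AP Ac) (η : Profile G) (s : S) (n : ℕ) : S :=
  (playHist G η s n).cur

/-- An agents' abilities augmented concurrent game structure (ACGS):
a CGS together with a strategy type for each agent; the epistemic
accessibility relation of perfect-information agents is the identity. -/
structure ACGSModel (S Agt AP : Type) (Ac : Agt → Type) where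
  G : CGS S Agt AP Ac
  pi : Agt → SType
  sim_id : ∀ i, (pi i = .IR ∨ pi i = .Ir) → ∀ s s', G.sim i s s' → s = s'

/-- A collective strategy of the coalition `A`. -/
def CollStrat (M : ACGSModel S Agt AP Ac) (A : Set Agt) : Type :=
  ∀ i, i ∈ A → Strat M.G i

/-- Each member of the coalition uses a strategy of its declared type. -/
def CollOk (M : ACGSModel S Agt AP Ac) (A : Set Agt) (ξ : CollStrat M A) : Prop :=
  ∀ i (h : i ∈ A), StratOfType M.G i (M.pi i) (ξ i h)

/-- Outcomes in an ACGS: plays from `s` in which each `i ∈ A` follows `ξ i`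
and each agent outside `A` follows some `π(i)`-strategy. -/
def outcomesM (M : ACGSModel S Agt AP Ac) (s : S) (A : Set Agt) (ξ : CollStrat M A) :
    Set (ℕ → S) :=
  { ρ | ∃ η : Profile M.G, (∀ i (h : i ∈ A), η i = ξ i h) ∧
      (∀ i, i ∉ A → StratOfType M.G i (M.pi i) (η i)) ∧ ρ = play M.G η s }

/-- A collective strategy of `A` in a plain CGS. -/
def CollStratC (G : CGS S Agt AP Ac) (A : Set Agt) : Type :=
  ∀ i, i ∈ A → Strat G i

/-- A collective `σ`-strategy. -/
def CollOkC (G : CGS S Agt AP Ac) (σ : SType) (A : Set Agt) (ξ : CollStratC G A) : Prop :=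
  ∀ i (h : i ∈ A), StratOfType G i σ (ξ i h)

/-- Outcomes in a plain CGS: plays from `s` in which each `i ∈ A` follows `ξ i`
and each agent outside `A` follows an arbitrary (`IR`-) strategy. -/
def outcomesC (G : CGS S Agt AP Ac) (s : S) (A : Set Agt) (ξ : CollStratC G A) :
    Set (ℕ → S) :=
  { ρ | ∃ η : Profile G, (∀ i (h : i ∈ A), η i = ξ i h) ∧ ρ = play G η s }


mutual
/-- ATL* state formulas. -/
inductive SForm (Agt AP : Type) where
  | atom : AP → SForm Agt AP
  | neg : SForm Agt AP → SForm Agt AP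
  | conj : SForm Agt AP → SForm Agt AP → SForm Agt AP
  | coal : Set Agt → PForm Agt AP → SForm Agt AP
/-- ATL* path formulas. -/
inductive PForm (Agt AP : Type) where
  | ofS : SForm Agt AP → PForm Agt AP
  | neg : PForm Agt AP → PForm Agt AP
  | conj : PForm Agt AP → PForm Agt AP → PForm Agt AP
  | next : PForm Agt AP → PForm Agt AP
  | untl : PForm Agt AP → PForm Agt AP → PForm Agt AP
end

mutual
/-- ACGS semantics of ATL* state formulas. -/
def sSat (M : ACGSModel S Agt AP Ac) : S → SForm Agt AP → Prop
  | s, .atom q => q ∈ M.G.label s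
  | s, .neg φ => ¬ sSat M s φ
  | s, .conj φ₁ φ₂ => sSat M s φ₁ ∧ sSat M s φ₂
  | s, .coal A ψ => ∃ ξ : CollStrat M A, CollOk M A ξ ∧
      ∀ ρ ∈ outcomesM M s A ξ, pSat M ρ ψ
/-- ACGS semantics of ATL* path formulas. -/
def pSat (M : ACGSModel S Agt AP Ac) : (ℕ → S) → PForm Agt AP → Prop
  | ρ, .ofS φ => sSat M (ρ 0) φ
  | ρ, .neg ψ => ¬ pSat M ρ ψ
  | ρ, .conj ψ₁ ψ₂ => pSat M ρ ψ₁ ∧ pSat M ρ ψ₂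
  | ρ, .next ψ => pSat M (fun n => ρ (n+1)) ψ
  | ρ, .untl ψ₁ ψ₂ => ∃ k, pSat M (fun n => ρ (n+k)) ψ₂ ∧
      ∀ j < k, pSat M (fun n => ρ (n+j)) ψ₁
end

mutual
/-- CGS `σ`-semantics of ATL* state formulas. -/
def sSatC (G : CGS S Agt AP Ac) (σ : SType) : S → SForm Agt AP → Prop
  | s, .atom q => q ∈ G.label s
  | s, .neg φ => ¬ sSatC G σ s φ
  | s, .conj φ₁ φ₂ => sSatC G σ s φ₁ ∧ sSatC G σ s φ₂
  | s, .coal A ψ => ∃ ξ : CollStratC G A, CollOkC G σ A ξ ∧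
      ∀ ρ ∈ outcomesC G s A ξ, pSatC G σ ρ ψ
/-- CGS `σ`-semantics of ATL* path formulas. -/
def pSatC (G : CGS S Agt AP Ac) (σ : SType) : (ℕ → S) → PForm Agt AP → Prop
  | ρ, .ofS φ => sSatC G σ (ρ 0) φ
  | ρ, .neg ψ => ¬ pSatC G σ ρ ψ
  | ρ, .conj ψ₁ ψ₂ => pSatC G σ ρ ψ₁ ∧ pSatC G σ ρ ψ₂
  | ρ, .next ψ => pSatC G σ (fun n => ρ (n+1)) ψ
  | ρ, .untl ψ₁ ψ₂ => ∃ k, pSatC G σ (fun n => ρ (n+k)) ψ₂ ∧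
      ∀ j < k, pSatC G σ (fun n => ρ (n+j)) ψ₁
end

mutual
/-- The set of agents appearing (in coalitions) in a state formula. -/
def agS : SForm Agt AP → Set Agt
  | .atom _ => ∅
  | .neg φ => agS φ
  | .conj φ₁ φ₂ => agS φ₁ ∪ agS φ₂
  | .coal A ψ => A ∪ agP ψ
/-- The set of agents appearing (in coalitions) in a path formula. -/
def agP : PForm Agt AP → Set Agt
  | .ofS φ => agS φ
  | .neg ψ => agP ψ
  | .conj ψ₁ ψ₂ => agP ψ₁ ∪ agP ψ₂
  | .next ψ => agP ψ
  | .untl ψ₁ ψ₂ => agP ψ₁ ∪ agP ψ₂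
end

mutual
/-- Every coalition modality occurring in the state formula carries
exactly the coalition `B`. -/
inductive CoalsEqS (B : Set Agt) : SForm Agt AP → Prop
  | atom (q : AP) : CoalsEqS B (.atom q)
  | neg {φ : SForm Agt AP} : CoalsEqS B φ → CoalsEqS B (.neg φ)
  | conj {φ₁ φ₂ : SForm Agt AP} :
      CoalsEqS B φ₁ → CoalsEqS B φ₂ → CoalsEqS B (.conj φ₁ φ₂)
  | coal {ψ : PForm Agt AP} : CoalsEqP B ψ → CoalsEqS B (.coal B ψ)
/-- Every coalition modality occurring in the path formula carries
exactly the coalition `B`. -/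
inductive CoalsEqP (B : Set Agt) : PForm Agt AP → Prop
  | ofS {φ : SForm Agt AP} : CoalsEqS B φ → CoalsEqP B (.ofS φ)
  | neg {ψ : PForm Agt AP} : CoalsEqP B ψ → CoalsEqP B (.neg ψ)
  | conj {ψ₁ ψ₂ : PForm Agt AP} :
      CoalsEqP B ψ₁ → CoalsEqP B ψ₂ → CoalsEqP B (.conj ψ₁ ψ₂)
  | next {ψ : PForm Agt AP} : CoalsEqP B ψ → CoalsEqP B (.next ψ)
  | untl {ψ₁ ψ₂ : PForm Agt AP} :
      CoalsEqP B ψ₁ → CoalsEqP B ψ₂ → CoalsEqP B (.untl ψ₁ ψ₂)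
end

lemma outcomes_eq_aux {S Agt AP : Type} {Ac : Agt → Type}
    (M : ACGSModel S Agt AP Ac) (B : Set Agt)
    (hB' : ∀ i ∉ B, M.pi i = SType.IR) (s : S) (ξ : CollStrat M B) :
    outcomesM M s B ξ = outcomesC M.G s B ξ := by
  ext ρ
  constructor
  · rintro ⟨η, ha, _, hc⟩; exact ⟨η, ha, hc⟩
  · rintro ⟨η, ha, hc⟩
    refine ⟨η, ha, fun i hi => ?_, hc⟩
    rw [hB' i hi]; trivial

mutual
theorem sIff_aux {S Agt AP : Type} {Ac : Agt → Type}
    (M : ACGSModel S Agt AP Ac) (σ : SType) (B : Set Agt)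
    (hB : ∀ i ∈ B, M.pi i = σ) (hB' : ∀ i ∉ B, M.pi i = SType.IR) :
    ∀ φ : SForm Agt AP, CoalsEqS B φ → ∀ s : S, (sSatC M.G σ s φ ↔ sSat M s φ)
  | .atom _, _, _ => Iff.rfl
  | .neg φ, h, s => by
      cases h with
      | neg h =>
        simp only [sSatC, sSat]
        exact not_congr (sIff_aux M σ B hB hB' φ h s)
  | .conj φ₁ φ₂, h, s => by
      cases h with
      | conj h₁ h₂ =>
        simp only [sSatC, sSat]
        exact and_congr (sIff_aux M σ B hB hB' φ₁ h₁ s)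
          (sIff_aux M σ B hB hB' φ₂ h₂ s)
  | .coal A ψ, h, s => by
      cases h with
      | coal hψ =>
        simp only [sSatC, sSat]
        constructor
        · rintro ⟨ξ, hok, hall⟩
          refine ⟨ξ, fun i hi => by rw [hB i hi]; exact hok i hi, ?_⟩
          intro ρ hρ
          rw [outcomes_eq_aux M B hB' s ξ] at hρ
          exact (pIff_aux M σ B hB hB' ψ hψ ρ).mp (hall ρ hρ)
        · rintro ⟨ξ, hok, hall⟩
          refine ⟨ξ, fun i hi => ?_, ?_⟩
          · have := hok i hi; rwa [hB i hi] at this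
          · intro ρ hρ
            rw [← outcomes_eq_aux M B hB' s ξ] at hρ
            exact (pIff_aux M σ B hB hB' ψ hψ ρ).mpr (hall ρ hρ)

theorem pIff_aux {S Agt AP : Type} {Ac : Agt → Type}
    (M : ACGSModel S Agt AP Ac) (σ : SType) (B : Set Agt)
    (hB : ∀ i ∈ B, M.pi i = σ) (hB' : ∀ i ∉ B, M.pi i = SType.IR) :
    ∀ ψ : PForm Agt AP, CoalsEqP B ψ → ∀ ρ : ℕ → S, (pSatC M.G σ ρ ψ ↔ pSat M ρ ψ)
  | .ofS φ, h, ρ => by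
      cases h with
      | ofS h =>
        simp only [pSatC, pSat]
        exact sIff_aux M σ B hB hB' φ h (ρ 0)
  | .neg ψ, h, ρ => by
      cases h with
      | neg h =>
        simp only [pSatC, pSat]
        exact not_congr (pIff_aux M σ B hB hB' ψ h ρ)
  | .conj ψ₁ ψ₂, h, ρ => by
      cases h with
      | conj h₁ h₂ =>
        simp only [pSatC, pSat]
        exact and_congr (pIff_aux M σ B hB hB' ψ₁ h₁ ρ)
          (pIff_aux M σ B hB hB' ψ₂ h₂ ρ)
  | .next ψ, h, ρ => by
      cases h with
      | next h =>
        simp only [pSatC, pSat]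
        exact pIff_aux M σ B hB hB' ψ h _
  | .untl ψ₁ ψ₂, h, ρ => by
      cases h with
      | untl h₁ h₂ =>
        simp only [pSatC, pSat]
        exact exists_congr fun k =>
          and_congr (pIff_aux M σ B hB hB' ψ₂ h₂ _)
            (forall_congr' fun j => forall_congr' fun _ =>
              pIff_aux M σ B hB hB' ψ₁ h₁ _)
end

/-- Let `M = (G, π)` be an ACGS, `σ` a strategy type and `φ` an ATL* formula
such that (1) `π(i) = σ` for every agent appearing in `φ`, (2) `π(i) = IR` for
every other agent, and (3) every coalition occurring in `φ` equals `Ag_φ`.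
Then `G, s ⊨_σ φ` iff `M, s ⊨ φ`. -/
theorem cgs_sat_iff_acgs_sat_of_uniform {S Agt AP : Type} {Ac : Agt → Type}
    (M : ACGSModel S Agt AP Ac) (s : S) (σ : SType) (φ : SForm Agt AP)
    (h1 : ∀ i ∈ agS φ, M.pi i = σ)
    (h2 : ∀ i ∉ agS φ, M.pi i = SType.IR)
    (h3 : CoalsEqS (agS φ) φ) :
    sSatC M.G σ s φ ↔ sSat M s φ :=
  sIff_aux M σ (agS φ) h1 h2 φ h3 s

end ACGS
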